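/- The average effective resistance of the square two-dimensional toroidal grid satisfies R_ave(T_{M²}) ~ (1/(2π))·log M as M → ∞; that is, lim_{M→∞} R_ave(T_{M,M}) / log M = 1/(2π), where log denotes the natural logarithm. -/

import Mathlib

open Real Finset

/-- Average effective resistance of the two-dimensional toroidal grid `T_{M1,M2}`. -/
noncomputable def Rave2 (M1 M2 : ℕ) : ℝ :=
  (1 / ((M1 : ℝ) * M2)) * ∑ i ∈ Finset.range M1, ∑ j ∈ Finset.range M2,
    if i = 0 ∧ j = 0 then 0
    else 1 / (4 - 2 * Real.cos (2 * Real.pi * i / M1) - 2 * Real.cos (2 * Real.pi * j / M2))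

/-!
Folding the frequencies `2πi/M` into `[0, π]`, each term `1/(4 - 2 cos θ - 2 cos φ)` differs from
`1/(θ² + φ²)` by at most `π²/48`, so `R_ave(T_{M,M})` is within `O(1)` of `1/(4π²)` times the
lattice sum of `1/(a² + b²)` over `0 < max(|a|, |b|) ≤ M/2`. Comparing each row of the quarter
`[1, n]²` with `∫₀^∞ dt/(a² + t²) = π/(2a)` shows that it contributes `(π/2) log n + O(1)`; the
four quadrants then give `2π log M + O(1)`, the axes `O(1)`, and dividing by `log M` gives `1/(2π)`.
-/

open Filter Asymptotics Topology

theorem Real.cos_le_one_sub_sq_div_two_add_pow_four_div (x : ℝ) :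
    cos x ≤ 1 - x ^ 2 / 2 + x ^ 4 / 24 := by
  wlog hx : 0 ≤ x generalizing x
  · have := this (-x) (by linarith)
    rwa [cos_neg, neg_sq, show (-x) ^ 4 = x ^ 4 by ring] at this
  have hcos : cos x = 1 - 2 * sin (x / 2) ^ 2 := by
    have := cos_two_mul' (x / 2)
    rw [mul_div_cancel₀ x two_ne_zero] at this
    nlinarith [sin_sq_add_cos_sq (x / 2)]
  have hsin := sin_ge_sub_cube (x := x / 2) (by positivity)
  rw [hcos]
  set t := x / 2
  rw [show x = 2 * t by ring]
  rcases le_or_gt (t ^ 2) 6 with hsmall | hlarge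
  · have h0 : 0 ≤ t - t ^ 3 / 6 := by nlinarith [show 0 ≤ t by positivity]
    nlinarith [pow_le_pow_left₀ h0 hsin 2, sq_nonneg (t ^ 3)]
  · nlinarith [sin_sq_le_one t]

theorem abs_inv_four_sub_two_cos_sub_inv_le {θ φ : ℝ} (hθ : |θ| ≤ π) (hφ : |φ| ≤ π) :
    |(4 - 2 * cos θ - 2 * cos φ)⁻¹ - (θ ^ 2 + φ ^ 2)⁻¹| ≤ π ^ 2 / 48 := by
  rcases (add_nonneg (sq_nonneg θ) (sq_nonneg φ)).eq_or_lt with hs | hs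
  · obtain ⟨rfl, rfl⟩ : θ = 0 ∧ φ = 0 := by constructor <;> nlinarith [sq_nonneg θ, sq_nonneg φ]
    norm_num
    positivity
  have hD_le : 4 - 2 * cos θ - 2 * cos φ ≤ θ ^ 2 + φ ^ 2 := by
    linarith [one_sub_sq_div_two_le_cos (x := θ), one_sub_sq_div_two_le_cos (x := φ)]
  have hD_ge : 4 / π ^ 2 * (θ ^ 2 + φ ^ 2) ≤ 4 - 2 * cos θ - 2 * cos φ := by
    have h : 4 / π ^ 2 * (θ ^ 2 + φ ^ 2) = 2 * (2 / π ^ 2 * θ ^ 2) + 2 * (2 / π ^ 2 * φ ^ 2) := by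
      ring
    linarith [cos_le_one_sub_mul_cos_sq hθ, cos_le_one_sub_mul_cos_sq hφ]
  have hD_quartic : θ ^ 2 + φ ^ 2 - (θ ^ 2 + φ ^ 2) ^ 2 / 12 ≤ 4 - 2 * cos θ - 2 * cos φ := by
    nlinarith [cos_le_one_sub_sq_div_two_add_pow_four_div θ,
      cos_le_one_sub_sq_div_two_add_pow_four_div φ, mul_nonneg (sq_nonneg θ) (sq_nonneg φ)]
  generalize 4 - 2 * cos θ - 2 * cos φ = D at *
  generalize θ ^ 2 + φ ^ 2 = s at *
  have hD : 0 < D := lt_of_lt_of_le (by positivity) hD_ge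
  rw [abs_of_nonneg (sub_nonneg.2 (inv_anti₀ hD hD_le)), inv_sub_inv hD.ne' hs.ne',
    div_le_iff₀ (by positivity)]
  calc s - D ≤ π ^ 2 / 48 * (4 / π ^ 2 * s * s) := by
        field_simp
        linarith
    _ ≤ π ^ 2 / 48 * (D * s) := by gcongr

theorem Finset.sum_Icc_one_eq_sum_range {M : Type*} [AddCommMonoid M] (f : ℕ → M) (n : ℕ) :
    ∑ i ∈ Icc 1 n, f i = ∑ i ∈ range n, f (i + 1) := by
  rw [range_eq_Ico, sum_Ico_add' f 0 n 1, zero_add, Ico_add_one_right_eq_Icc]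

theorem sum_Icc_inv_sq_le_two (n : ℕ) : ∑ b ∈ Icc 1 n, ((b : ℝ) ^ 2)⁻¹ ≤ 2 := by
  have h := sum_Ioo_inv_sq_le (α := ℝ) 0 (n + 1)
  rw [show Ioo 0 (n + 1) = Icc 1 n by ext; simp only [mem_Ioo, mem_Icc]; omega] at h
  simpa using h

theorem Real.arctan_le_self {x : ℝ} (hx : 0 ≤ x) : arctan x ≤ x := by
  simpa using le_tan (arctan_nonneg.2 hx) (arctan_lt_pi_div_two x)

theorem antitoneOn_inv_sq_add_sq {a : ℝ} (ha : a ≠ 0) :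
    AntitoneOn (fun t : ℝ => (a ^ 2 + t ^ 2)⁻¹) (Set.Ici 0) := by
  intro s (hs : 0 ≤ s) t _ hst
  have : 0 < a ^ 2 := by positivity
  exact inv_anti₀ (by positivity) (by gcongr)

theorem sum_Icc_inv_sq_add_sq_le {a : ℝ} (ha : 0 < a) (n : ℕ) :
    ∑ b ∈ Icc 1 n, (a ^ 2 + (b : ℝ) ^ 2)⁻¹ ≤ π / (2 * a) := by
  have h := ((antitoneOn_inv_sq_add_sq ha.ne').mono Set.Icc_subset_Ici_self).sum_le_integral
    (x₀ := 0) (a := n)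
  simp only [zero_add, integral_inv_sq_add_sq ha.ne', zero_div, arctan_zero, sub_zero] at h
  rw [sum_Icc_one_eq_sum_range (fun b : ℕ => (a ^ 2 + (b : ℝ) ^ 2)⁻¹)]
  calc _ ≤ a⁻¹ * arctan (n / a) := h
    _ ≤ a⁻¹ * (π / 2) := by gcongr; exact (arctan_lt_pi_div_two _).le
    _ = π / (2 * a) := by field_simp

theorem le_sum_Icc_inv_sq_add_sq {a : ℝ} (ha : 0 < a) (n : ℕ) :
    π / (2 * a) - ((n : ℝ) + 1)⁻¹ - (a ^ 2)⁻¹ ≤ ∑ b ∈ Icc 1 n, (a ^ 2 + (b : ℝ) ^ 2)⁻¹ := by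
  have h := ((antitoneOn_inv_sq_add_sq ha.ne').mono Set.Icc_subset_Ici_self).integral_le_sum
    (x₀ := 0) (a := n + 1)
  simp only [zero_add, integral_inv_sq_add_sq ha.ne', zero_div, arctan_zero, sub_zero,
    sum_range_succ', Nat.cast_add, Nat.cast_one, Nat.cast_zero, add_zero, zero_pow two_ne_zero] at h
  rw [sum_Icc_one_eq_sum_range (fun b : ℕ => (a ^ 2 + (b : ℝ) ^ 2)⁻¹)]
  have harctan : arctan ((n + 1) / a) = π / 2 - arctan (a / (n + 1)) := by
    rw [← arctan_inv_of_pos (by positivity), inv_div]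
  have hle := arctan_le_self (x := a / (n + 1)) (by positivity)
  have hmono : a⁻¹ * (π / 2 - a / (n + 1)) ≤ a⁻¹ * arctan ((n + 1) / a) := by
    rw [harctan]; gcongr
  have e : a⁻¹ * (π / 2 - a / (n + 1)) = π / (2 * a) - ((n : ℝ) + 1)⁻¹ := by field_simp
  push_cast
  linarith

theorem harmonic_eq_sum_Icc_inv (n : ℕ) : (harmonic n : ℝ) = ∑ a ∈ Icc 1 n, (a : ℝ)⁻¹ := by
  simp [harmonic_eq_sum_Icc]

noncomputable def invNormSq (a b : ℕ) : ℝ := ((a : ℝ) ^ 2 + (b : ℝ) ^ 2)⁻¹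

theorem invNormSq_nonneg (a b : ℕ) : 0 ≤ invNormSq a b := by
  unfold invNormSq; positivity

noncomputable def squareLatticeSum (n : ℕ) : ℝ := ∑ a ∈ Icc 1 n, ∑ b ∈ Icc 1 n, invNormSq a b

theorem squareLatticeSum_le (n : ℕ) : squareLatticeSum n ≤ π / 2 * (1 + log n) :=
  calc squareLatticeSum n ≤ ∑ a ∈ Icc 1 n, π / 2 * (a : ℝ)⁻¹ := by
        refine sum_le_sum fun a ha => ?_
        have ha : (0 : ℝ) < a := Nat.cast_pos.2 (mem_Icc.1 ha).1
        calc _ ≤ π / (2 * a) := sum_Icc_inv_sq_add_sq_le ha n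
          _ = _ := by field_simp
    _ = π / 2 * harmonic n := by rw [← mul_sum, harmonic_eq_sum_Icc_inv]
    _ ≤ π / 2 * (1 + log n) := by gcongr; exact harmonic_le_one_add_log n

theorem le_squareLatticeSum (n : ℕ) : π / 2 * log n - 3 ≤ squareLatticeSum n := by
  have hrows : ∑ a ∈ Icc 1 n, (π / 2 * (a : ℝ)⁻¹ - ((n : ℝ) + 1)⁻¹ - ((a : ℝ) ^ 2)⁻¹)
      ≤ squareLatticeSum n := by
    refine sum_le_sum fun a ha => ?_
    have ha : (0 : ℝ) < a := Nat.cast_pos.2 (mem_Icc.1 ha).1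
    calc _ = π / (2 * a) - ((n : ℝ) + 1)⁻¹ - ((a : ℝ) ^ 2)⁻¹ := by field_simp
      _ ≤ _ := le_sum_Icc_inv_sq_add_sq ha n
  rw [sum_sub_distrib, sum_sub_distrib, ← mul_sum, ← harmonic_eq_sum_Icc_inv, sum_const,
    Nat.card_Icc, nsmul_eq_mul] at hrows
  have hlog : log n ≤ harmonic n := by simpa using log_le_harmonic_floor n n.cast_nonneg
  have hfrac : ((n + 1 - 1 : ℕ) : ℝ) * ((n : ℝ) + 1)⁻¹ ≤ 1 := by
    rw [Nat.add_sub_cancel, ← div_eq_mul_inv, div_le_one (by positivity)]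
    linarith
  have := sum_Icc_inv_sq_le_two n
  have : π / 2 * log n ≤ π / 2 * harmonic n := by gcongr
  linarith

def cycleDist (M i : ℕ) : ℕ := min i (M - i)

theorem sum_range_cycleDist {β : Type*} [AddCommMonoid β] (f : ℕ → β) {M : ℕ} (hM : 0 < M) :
    ∑ i ∈ range M, f (cycleDist M i) =
      f 0 + (∑ a ∈ Icc 1 (M / 2), f a + ∑ a ∈ Icc 1 ((M - 1) / 2), f a) := by
  rw [← sum_range_add_sum_Ico _ (by omega : M / 2 + 1 ≤ M), sum_range_succ', add_right_comm,
    add_comm]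
  congr 1
  congr 1
  · rw [sum_Icc_one_eq_sum_range]
    refine sum_congr rfl fun i hi => ?_
    rw [mem_range] at hi
    congr 1
    simp only [cycleDist]
    omega
  · rw [sum_congr rfl fun j hj => congrArg f (show cycleDist M j = M - j by
      simp only [cycleDist]; rw [mem_Ico] at hj; omega), sum_Ico_reflect f _ (by omega),
      show M + 1 - (M / 2 + 1) = (M - 1) / 2 + 1 by omega, Nat.add_sub_cancel_left,
      Ico_add_one_right_eq_Icc]

theorem sum_range_cycleDist_le {f : ℕ → ℝ} (hf : ∀ a, 0 ≤ f a) {M : ℕ} (hM : 0 < M) :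
    ∑ i ∈ range M, f (cycleDist M i) ≤ f 0 + 2 * ∑ a ∈ Icc 1 (M / 2), f a := by
  have : ∑ a ∈ Icc 1 ((M - 1) / 2), f a ≤ ∑ a ∈ Icc 1 (M / 2), f a :=
    sum_le_sum_of_subset_of_nonneg (Icc_subset_Icc_right (by omega)) fun a _ _ => hf a
  rw [sum_range_cycleDist f hM]
  linarith

theorem le_sum_range_cycleDist {f : ℕ → ℝ} (hf : ∀ a, 0 ≤ f a) {M : ℕ} (hM : 0 < M) :
    f 0 + 2 * ∑ a ∈ Icc 1 ((M - 1) / 2), f a ≤ ∑ i ∈ range M, f (cycleDist M i) := by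
  have : ∑ a ∈ Icc 1 ((M - 1) / 2), f a ≤ ∑ a ∈ Icc 1 (M / 2), f a :=
    sum_le_sum_of_subset_of_nonneg (Icc_subset_Icc_right (by omega)) fun a _ _ => hf a
  rw [sum_range_cycleDist f hM]
  linarith

/-- The origin is excluded through the junk value `invNormSq 0 0 = 0⁻¹ = 0`. -/
noncomputable def torusLatticeSum (M : ℕ) : ℝ :=
  ∑ i ∈ range M, ∑ j ∈ range M, invNormSq (cycleDist M i) (cycleDist M j)

theorem torusLatticeSum_le {M : ℕ} (hM : 0 < M) :
    torusLatticeSum M ≤ 4 * squareLatticeSum (M / 2) + 8 := by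
  set m := M / 2
  have hrow : ∀ a, ∑ j ∈ range M, invNormSq a (cycleDist M j)
      ≤ invNormSq a 0 + 2 * ∑ b ∈ Icc 1 m, invNormSq a b := fun a =>
    sum_range_cycleDist_le (invNormSq_nonneg a) hM
  have haxis_left : ∑ b ∈ Icc 1 m, invNormSq 0 b ≤ 2 := by
    simpa [invNormSq] using sum_Icc_inv_sq_le_two m
  have haxis_right : ∑ a ∈ Icc 1 m, invNormSq a 0 ≤ 2 := by
    simpa [invNormSq] using sum_Icc_inv_sq_le_two m
  have horigin : invNormSq 0 0 = 0 := by simp [invNormSq]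
  calc torusLatticeSum M
      ≤ ∑ j ∈ range M, invNormSq 0 (cycleDist M j)
        + 2 * ∑ a ∈ Icc 1 m, ∑ j ∈ range M, invNormSq a (cycleDist M j) :=
        sum_range_cycleDist_le (f := fun a => ∑ j ∈ range M, invNormSq a (cycleDist M j))
          (fun a => sum_nonneg fun j _ => invNormSq_nonneg _ _) hM
    _ ≤ invNormSq 0 0 + 2 * ∑ b ∈ Icc 1 m, invNormSq 0 b
        + 2 * ∑ a ∈ Icc 1 m, (invNormSq a 0 + 2 * ∑ b ∈ Icc 1 m, invNormSq a b) := by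
        gcongr with a
        exacts [hrow 0, hrow a]
    _ ≤ 4 * squareLatticeSum m + 8 := by
        rw [sum_add_distrib, ← mul_sum, horigin, squareLatticeSum]
        linarith

theorem le_torusLatticeSum {M : ℕ} (hM : 0 < M) :
    4 * squareLatticeSum ((M - 1) / 2) ≤ torusLatticeSum M := by
  set m := (M - 1) / 2
  have hrow : ∀ a, 2 * ∑ b ∈ Icc 1 m, invNormSq a b
      ≤ ∑ j ∈ range M, invNormSq a (cycleDist M j) := fun a =>
    (le_add_of_nonneg_left (invNormSq_nonneg a 0)).trans
      (le_sum_range_cycleDist (invNormSq_nonneg a) hM)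
  calc 4 * squareLatticeSum m
      = 2 * ∑ a ∈ Icc 1 m, 2 * ∑ b ∈ Icc 1 m, invNormSq a b := by
        rw [squareLatticeSum, ← mul_sum, ← mul_assoc]; norm_num
    _ ≤ 2 * ∑ a ∈ Icc 1 m, ∑ j ∈ range M, invNormSq a (cycleDist M j) := by
        gcongr with a; exact hrow a
    _ ≤ ∑ j ∈ range M, invNormSq 0 (cycleDist M j)
        + 2 * ∑ a ∈ Icc 1 m, ∑ j ∈ range M, invNormSq a (cycleDist M j) :=
        le_add_of_nonneg_left (sum_nonneg fun j _ => invNormSq_nonneg _ _)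
    _ ≤ torusLatticeSum M :=
        le_sum_range_cycleDist (f := fun a => ∑ j ∈ range M, invNormSq a (cycleDist M j))
          (fun a => sum_nonneg fun j _ => invNormSq_nonneg _ _) hM

theorem torusLatticeSum_sub_log_isBigO :
    (fun M : ℕ => torusLatticeSum M - 2 * π * log M) =O[atTop] fun _ => (1 : ℝ) := by
  refine .of_bound ((2 * π + 8) + (2 * π * log 4 + 12)) ?_
  filter_upwards [eventually_ge_atTop 4] with M hM
  have hhalf : (0 : ℝ) < (M / 2 : ℕ) := by norm_cast; omega
  have hhalf' : (0 : ℝ) < ((M - 1) / 2 : ℕ) := by norm_cast; omega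
  have hupper : torusLatticeSum M ≤ 2 * π * log M + (2 * π + 8) :=
    calc torusLatticeSum M ≤ 4 * squareLatticeSum (M / 2) + 8 := torusLatticeSum_le (by omega)
      _ ≤ 4 * (π / 2 * (1 + log (M / 2 : ℕ))) + 8 := by gcongr; exact squareLatticeSum_le _
      _ ≤ 4 * (π / 2 * (1 + log M)) + 8 := by
        gcongr; exact_mod_cast Nat.div_le_self M 2
      _ = 2 * π * log M + (2 * π + 8) := by ring
  have hlower : 2 * π * log M - (2 * π * log 4 + 12) ≤ torusLatticeSum M :=
    calc 2 * π * log M - (2 * π * log 4 + 12) = 4 * (π / 2 * (log M - log 4) - 3) := by ring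
      _ ≤ 4 * (π / 2 * log ((M - 1) / 2 : ℕ) - 3) := by
        gcongr
        rw [sub_le_iff_le_add', ← log_mul (by norm_num) hhalf'.ne']
        exact log_le_log (by positivity) (by norm_cast; omega)
      _ ≤ 4 * squareLatticeSum ((M - 1) / 2) := by gcongr; exact le_squareLatticeSum _
      _ ≤ torusLatticeSum M := le_torusLatticeSum (by omega)
  have : 0 ≤ 2 * π + 8 := by positivity
  have : 0 ≤ 2 * π * log 4 + 12 := by positivity
  rw [norm_one, mul_one, Real.norm_eq_abs, abs_le]
  constructor <;> linarith

noncomputable def torusAngle (M i : ℕ) : ℝ := 2 * π * cycleDist M i / M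

theorem cos_torusAngle {M i : ℕ} (hi : i ≤ M) : cos (torusAngle M i) = cos (2 * π * i / M) := by
  rcases eq_or_ne M 0 with rfl | hM
  · simp [torusAngle]
  rw [torusAngle, cycleDist]
  rcases le_total i (M - i) with h | h
  · rw [min_eq_left h]
  · rw [min_eq_right h, Nat.cast_sub hi, mul_sub, sub_div, mul_div_assoc, div_self (by simpa),
      mul_one, cos_two_pi_sub]

theorem abs_torusAngle_le (M i : ℕ) : |torusAngle M i| ≤ π := by
  rw [torusAngle, abs_of_nonneg (by positivity)]
  rcases eq_or_ne M 0 with rfl | hM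
  · simp [pi_nonneg]
  have h : 2 * (cycleDist M i : ℝ) ≤ M := by
    norm_cast; unfold cycleDist; omega
  rw [div_le_iff₀ (by positivity)]
  nlinarith [pi_pos]

theorem Rave2_self_eq (M : ℕ) :
    Rave2 M M = ((M : ℝ) * M)⁻¹ * ∑ i ∈ range M, ∑ j ∈ range M,
      (4 - 2 * cos (torusAngle M i) - 2 * cos (torusAngle M j))⁻¹ := by
  rw [Rave2, one_div]
  congr 1
  refine sum_congr rfl fun i hi => sum_congr rfl fun j hj => ?_
  rw [cos_torusAngle (mem_range.1 hi).le, cos_torusAngle (mem_range.1 hj).le, one_div]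
  split_ifs with h
  · -- the omitted origin term matches the junk value `0⁻¹ = 0`
    obtain ⟨rfl, rfl⟩ := h
    norm_num
  · rfl

theorem torusLatticeSum_div_eq (M : ℕ) :
    torusLatticeSum M / (4 * π ^ 2) = ((M : ℝ) * M)⁻¹ * ∑ i ∈ range M, ∑ j ∈ range M,
      (torusAngle M i ^ 2 + torusAngle M j ^ 2)⁻¹ := by
  rcases eq_or_ne M 0 with rfl | hM
  · simp [torusLatticeSum]
  have hscale : ∀ i j, torusAngle M i ^ 2 + torusAngle M j ^ 2 =
      (2 * π / M) ^ 2 * ((cycleDist M i : ℝ) ^ 2 + (cycleDist M j : ℝ) ^ 2) := fun i j => by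
    simp only [torusAngle]; ring
  simp_rw [hscale, mul_inv, ← mul_sum, ← mul_assoc, torusLatticeSum, invNormSq, div_eq_inv_mul]
  congr 1
  field_simp
  norm_num

theorem abs_Rave2_sub_torusLatticeSum_le (M : ℕ) :
    |Rave2 M M - torusLatticeSum M / (4 * π ^ 2)| ≤ π ^ 2 / 48 := by
  rw [Rave2_self_eq, torusLatticeSum_div_eq, ← mul_sub, ← sum_sub_distrib]
  simp_rw [← sum_sub_distrib]
  calc _ ≤ ((M : ℝ) * M)⁻¹ * ∑ i ∈ range M, ∑ j ∈ range M, π ^ 2 / 48 := by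
        rw [abs_mul, abs_of_nonneg (by positivity)]
        gcongr
        refine (abs_sum_le_sum_abs _ _).trans (sum_le_sum fun i _ => ?_)
        refine (abs_sum_le_sum_abs _ _).trans (sum_le_sum fun j _ => ?_)
        exact abs_inv_four_sub_two_cos_sub_inv_le (abs_torusAngle_le M i) (abs_torusAngle_le M j)
    _ ≤ π ^ 2 / 48 := by
        rcases eq_or_ne M 0 with rfl | hM
        · simp only [Nat.cast_zero, mul_zero, inv_zero, zero_mul]
          positivity
        simp only [sum_const, card_range, nsmul_eq_mul]
        field_simp
        rfl

theorem Rave2_sub_log_isBigO :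
    (fun M : ℕ => Rave2 M M - 1 / (2 * π) * log M) =O[atTop] fun _ => (1 : ℝ) := by
  have hbridge : (fun M : ℕ => Rave2 M M - torusLatticeSum M / (4 * π ^ 2))
      =O[atTop] fun _ => (1 : ℝ) :=
    .of_bound (π ^ 2 / 48) (.of_forall fun M => by
      simpa using abs_Rave2_sub_torusLatticeSum_le M)
  refine (hbridge.add (torusLatticeSum_sub_log_isBigO.const_mul_left (4 * π ^ 2)⁻¹)).congr_left
    fun M => ?_
  field_simp
  ring

theorem tendsto_div_of_isBigO_sub_mul {α : Type*} {l : Filter α} {f g : α → ℝ} {c : ℝ}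
    (hg : Tendsto g l atTop) (h : (fun x => f x - c * g x) =O[l] fun _ => (1 : ℝ)) :
    Tendsto (fun x => f x / g x) l (𝓝 c) := by
  have hrem : Tendsto (fun x => (f x - c * g x) * (g x)⁻¹) l (𝓝 0) :=
    (h.mul (isBigO_refl (fun x => (g x)⁻¹) l)).trans_tendsto
      ((tendsto_inv_atTop_zero.comp hg).congr fun x => (one_mul _).symm)
  refine (by simpa using hrem.const_add c : Tendsto _ l (𝓝 c)).congr' ?_
  filter_upwards [hg.eventually_gt_atTop 0] with x hx
  field_simp
  ring

theorem torus2_square_asymptotic :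
    Filter.Tendsto (fun M : ℕ => Rave2 M M / Real.log M) Filter.atTop
      (nhds (1 / (2 * Real.pi))) :=
  tendsto_div_of_isBigO_sub_mul (g := fun M : ℕ => log M)
    (tendsto_log_atTop.comp tendsto_natCast_atTop_atTop) Rave2_sub_log_isBigO
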